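/- Let x, p ∈ ℝ³ and set y = −x. Define ξ(x,p) ∈ ℝ⁴ by ξᵢ = ((|p|²+1)/2)·yᵢ − (y·p)·pᵢ for i = 1,2,3 and ξ₄ = y·p. Then ‖ξ(x,p)‖ = ((|p|²+1)/2)·|x|. Consequently, if x ≠ 0 and |p|²/2 − 1/|x| = −1/2, then ‖ξ(x,p)‖ = 1; that is, the Moser map sends the energy surface Σ(−1/2) into the unit cotangent bundle of the 3-sphere. -/

import Mathlib

/-- `|p|²` on `Fin 3 → ℝ`. -/
noncomputable def normSq3 (p : Fin 3 → ℝ) : ℝ := p 0 ^ 2 + p 1 ^ 2 + p 2 ^ 2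

/-- Euclidean dot product on `Fin 3 → ℝ`. -/
noncomputable def dot3 (x p : Fin 3 → ℝ) : ℝ := x 0 * p 0 + x 1 * p 1 + x 2 * p 2

/-- Euclidean norm on `Fin 3 → ℝ`. -/
noncomputable def norm3 (x : Fin 3 → ℝ) : ℝ := Real.sqrt (dot3 x x)

/-- Euclidean norm on `Fin 4 → ℝ`. -/
noncomputable def norm4 (x : Fin 4 → ℝ) : ℝ :=
  Real.sqrt (x 0 ^ 2 + x 1 ^ 2 + x 2 ^ 2 + x 3 ^ 2)

/-- The `ξ`-component of the Moser map: with `y = −x`,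
`ξᵢ = ((|p|²+1)/2)yᵢ − (y·p)pᵢ` for `i = 1,2,3` and `ξ₄ = y·p`. -/
noncomputable def moserXi (x p : Fin 3 → ℝ) : Fin 4 → ℝ :=
  ![(normSq3 p + 1) / 2 * (-x) 0 - dot3 (-x) p * p 0,
    (normSq3 p + 1) / 2 * (-x) 1 - dot3 (-x) p * p 1,
    (normSq3 p + 1) / 2 * (-x) 2 - dot3 (-x) p * p 2,
    dot3 (-x) p]

theorem normSq3_nonneg (p : Fin 3 → ℝ) : 0 ≤ normSq3 p := by
  unfold normSq3
  positivity

theorem dot3_self_pos {x : Fin 3 → ℝ} (hx : x ≠ 0) : 0 < dot3 x x := by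
  have hsum : dot3 x x = ∑ i, x i ^ 2 := by
    simp only [dot3, Fin.sum_univ_three, sq]
  obtain ⟨i, hi⟩ := Function.ne_iff.mp hx
  rw [hsum]
  exact Finset.sum_pos' (fun j _ => sq_nonneg (x j)) ⟨i, Finset.mem_univ i, sq_pos_of_ne_zero hi⟩

/- With `a = (|p|² + 1)/2` and `s = y·p`, the left side is `a²|y|² + s²(|p|² + 1 − 2a)`,
and the choice of `a` kills the second term. -/
theorem moserXi_sq_sum (x p : Fin 3 → ℝ) :
    moserXi x p 0 ^ 2 + moserXi x p 1 ^ 2 + moserXi x p 2 ^ 2 + moserXi x p 3 ^ 2 =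
      ((normSq3 p + 1) / 2) ^ 2 * dot3 x x := by
  simp only [moserXi, normSq3, dot3, Pi.neg_apply, Matrix.cons_val]
  ring

theorem norm4_moserXi (x p : Fin 3 → ℝ) :
    norm4 (moserXi x p) = (normSq3 p + 1) / 2 * norm3 x := by
  have ha : 0 ≤ (normSq3 p + 1) / 2 := by linarith [normSq3_nonneg p]
  rw [norm4, moserXi_sq_sum, Real.sqrt_mul (sq_nonneg _), Real.sqrt_sq ha, norm3]

/-- `‖ξ(x,p)‖ = ((|p|²+1)/2)|x|`; consequently on the energy surface
`Σ(−1/2)` one has `‖ξ(x,p)‖ = 1`. -/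
theorem stmt6 (x p : Fin 3 → ℝ) :
    norm4 (moserXi x p) = (normSq3 p + 1) / 2 * norm3 x ∧
    (x ≠ 0 → normSq3 p / 2 - 1 / norm3 x = -(1/2) → norm4 (moserXi x p) = 1) := by
  refine ⟨norm4_moserXi x p, fun hx henergy => ?_⟩
  have hnorm : 0 < norm3 x := Real.sqrt_pos.mpr (dot3_self_pos hx)
  have hfactor : (normSq3 p + 1) / 2 = 1 / norm3 x := by linarith
  rw [norm4_moserXi, hfactor, one_div_mul_cancel hnorm.ne']
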